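/- Let H be a connected finite simple graph of diameter D(H) ≥ 6 and let k be an integer with 1 ≤ k ≤ C(K_1 + H). Then adim_k(K_1 + H) = adim_k(H). -/

import Mathlib

open Finset

namespace AdjDim

noncomputable section
open Classical

variable {V W : Type*}

/-- Truncated distance `d_{G,2}(x,y) = min(d_G(x,y), 2)`:
`0` if `x = y`, `1` if `x` and `y` are adjacent, and `2` otherwise. -/
def d2 (G : SimpleGraph V) (x y : V) : ℕ :=
  if x = y then 0 else if G.Adj x y then 1 else 2

/-- `S` is a `k`-adjacency generator for `G`: every pair of distinct vertices is
distinguished (w.r.t. `d_{G,2}`) by at least `k` vertices of `S`. -/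
def IsKAdjGen (G : SimpleGraph V) [Fintype V] (k : ℕ) (S : Finset V) : Prop :=
  ∀ x y : V, x ≠ y → k ≤ (S.filter (fun w => d2 G x w ≠ d2 G y w)).card

/-- The `k`-adjacency dimension of `G`: the minimum cardinality of a
`k`-adjacency generator. -/
def adim (G : SimpleGraph V) [Fintype V] (k : ℕ) : ℕ :=
  sInf {n | ∃ S : Finset V, IsKAdjGen G k S ∧ S.card = n}

/-- `B` is a `k`-adjacency basis of `G`: a `k`-adjacency generator of minimum
cardinality. -/
def IsKAdjBasis (G : SimpleGraph V) [Fintype V] (k : ℕ) (B : Finset V) : Prop :=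
  IsKAdjGen G k B ∧ B.card = adim G k

/-- `G` is `k`-adjacency dimensional: `k` is the largest integer for which a
`k`-adjacency generator exists. -/
def IsKAdjDimensional (G : SimpleGraph V) [Fintype V] (k : ℕ) : Prop :=
  (∃ S : Finset V, IsKAdjGen G k S) ∧
    ∀ k' : ℕ, k < k' → ¬ ∃ S : Finset V, IsKAdjGen G k' S

/-- `C_G(x,y)`: the set of vertices distinguishing `x` and `y` w.r.t. `d_{G,2}`. -/
def CSet (G : SimpleGraph V) [Fintype V] (x y : V) : Finset V :=
  univ.filter (fun z => d2 G x z ≠ d2 G y z)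

/-- `C(G) = min_{x ≠ y} |C_G(x,y)|`. -/
def Cmin (G : SimpleGraph V) [Fintype V] : ℕ :=
  sInf {m | ∃ x y : V, x ≠ y ∧ (CSet G x y).card = m}

/-- `C_k(G)`: the union of the sets `C_G(x,y)` over pairs of distinct vertices
with `|C_G(x,y)| = k`. -/
def Ck (G : SimpleGraph V) [Fintype V] (k : ℕ) : Finset V :=
  univ.filter (fun z => ∃ x y : V, x ≠ y ∧ (CSet G x y).card = k ∧ z ∈ CSet G x y)

/-- Two distinct vertices `x, y` are twins: every other vertex is at the same
truncated distance from both. -/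
def Twins (G : SimpleGraph V) (x y : V) : Prop :=
  x ≠ y ∧ ∀ z : V, z ≠ x → z ≠ y → d2 G x z = d2 G y z

/-- The join `G + H` of two vertex-disjoint graphs. -/
def join (G : SimpleGraph V) (H : SimpleGraph W) : SimpleGraph (V ⊕ W) where
  Adj x y :=
    match x, y with
    | Sum.inl a, Sum.inl b => G.Adj a b
    | Sum.inr a, Sum.inr b => H.Adj a b
    | Sum.inl _, Sum.inr _ => True
    | Sum.inr _, Sum.inl _ => True
  symm := ⟨by
    rintro (a | a) (b | b) h
    · exact G.adj_symm h
    · trivial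
    · trivial
    · exact H.adj_symm h⟩
  loopless := ⟨by
    rintro (a | a) h
    · exact G.irrefl h
    · exact H.irrefl h⟩

/-- `K_1 + H`: the join of a one-vertex graph with `H`, i.e. `H` together with a
new universal vertex. -/
def K1join (H : SimpleGraph W) : SimpleGraph (Unit ⊕ W) :=
  join (⊥ : SimpleGraph Unit) H

/-!
Restricting a `k`-adjacency generator of `K₁ + H` to `H` gives one of `H`: the universal vertex
is at truncated distance `1` from every vertex of `H`, so it separates no pair of them.
Conversely, a `k`-adjacency generator `B` of `H` is one of `K₁ + H` as soon as every vertex `v`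
of `H` has at least `k` non-neighbours in `B`, since these are exactly the vertices of `B`
separating `v` from the universal vertex. If `diam H ≥ 6`, `v` has two distinct vertices `x, y`
at distance `≥ 3`; a vertex separating `x` and `y` is within distance `1` of one of them, hence
not adjacent to `v`, and `B` contains at least `k` such vertices.
-/

section Dimension

variable {V' : Type*} [Fintype V] [Fintype V'] {G : SimpleGraph V} {G' : SimpleGraph V'} {k : ℕ}

theorem adim_le_card {S : Finset V} (hS : IsKAdjGen G k S) : adim G k ≤ #S := by
  unfold adim
  exact Nat.sInf_le ⟨S, hS, rfl⟩

theorem exists_isKAdjGen_card_eq_adim (h : ∃ S, IsKAdjGen G k S) :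
    ∃ B, IsKAdjGen G k B ∧ #B = adim G k := by
  obtain ⟨S, hS⟩ := h
  exact Nat.sInf_mem (s := {n | ∃ B, IsKAdjGen G k B ∧ #B = n}) ⟨#S, S, hS, rfl⟩

theorem adim_eq_zero_of_forall_not_isKAdjGen (h : ∀ S, ¬ IsKAdjGen G k S) : adim G k = 0 := by
  unfold adim
  convert Nat.sInf_empty
  exact Set.eq_empty_of_forall_notMem fun _ ⟨S, hS, _⟩ => h S hS

theorem adim_le_adim_of_forall_exists (hG : ∃ S, IsKAdjGen G k S)
    (h : ∀ S, IsKAdjGen G k S → ∃ T, IsKAdjGen G' k T ∧ #T ≤ #S) : adim G' k ≤ adim G k := by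
  obtain ⟨B, hB, hBcard⟩ := exists_isKAdjGen_card_eq_adim hG
  obtain ⟨T, hT, hTB⟩ := h B hB
  exact (adim_le_card hT).trans (hTB.trans hBcard.le)

theorem adim_eq_adim_of_forall_exists
    (h : ∀ S, IsKAdjGen G k S → ∃ T, IsKAdjGen G' k T ∧ #T ≤ #S)
    (h' : ∀ T, IsKAdjGen G' k T → ∃ S, IsKAdjGen G k S ∧ #S ≤ #T) : adim G k = adim G' k := by
  by_cases hG : ∃ S, IsKAdjGen G k S
  · have hG' : ∃ T, IsKAdjGen G' k T := by
      obtain ⟨S, hS⟩ := hG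
      obtain ⟨T, hT, -⟩ := h S hS
      exact ⟨T, hT⟩
    exact le_antisymm (adim_le_adim_of_forall_exists hG' h') (adim_le_adim_of_forall_exists hG h)
  · simp only [not_exists] at hG
    rw [adim_eq_zero_of_forall_not_isKAdjGen hG, adim_eq_zero_of_forall_not_isKAdjGen fun T hT =>
      let ⟨S, hS, _⟩ := h' T hT; hG S hS]

end Dimension

section Distance

variable {G : SimpleGraph V} {x y v : V}

theorem d2_eq_one_iff : d2 G x y = 1 ↔ G.Adj x y := by
  unfold d2
  split_ifs <;> simp_all

theorem d2_eq_two_of_adj_of_three_le_dist (hvy : G.Adj v y) (hx : 3 ≤ G.dist v x) :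
    d2 G x y = 2 := by
  have hvy' : G.dist v y = 1 := SimpleGraph.dist_eq_one_iff_adj.mpr hvy
  have hxy : x ≠ y := by rintro rfl; omega
  have hnadj : ¬ G.Adj x y := fun hadj => by
    have := hvy.reachable.dist_triangle_left x
    have := SimpleGraph.dist_eq_one_iff_adj.mpr hadj.symm
    omega
  simp [d2, hxy, hnadj]

theorem _root_.SimpleGraph.Reachable.exists_dist_eq_of_le_dist {n : ℕ} (h : G.Reachable v x)
    (hn : n ≤ G.dist v x) : ∃ y, G.dist v y = n := by
  obtain ⟨p, hp⟩ := h.exists_walk_length_eq_dist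
  refine ⟨p.getVert n, ?_⟩
  rw [← SimpleGraph.length_eq_dist_of_subwalk hp (p.isSubwalk_take n),
    SimpleGraph.Walk.take_length]
  omega

theorem exists_ne_of_two_mul_le_diam {r : ℕ} (hr : 0 < r) (h : 2 * r ≤ G.diam) (v : V) :
    ∃ x y, x ≠ y ∧ r ≤ G.dist v x ∧ r ≤ G.dist v y := by
  have : Nonempty V := ⟨v⟩
  -- `diam` is `0` for a disconnected graph
  have hconn : G.Connected :=
    SimpleGraph.connected_of_ediam_ne_top (SimpleGraph.ediam_ne_top_of_diam_ne_zero (by omega))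
  have of_lt_dist : ∀ b, r < G.dist v b → ∃ x y, x ≠ y ∧ r ≤ G.dist v x ∧ r ≤ G.dist v y := by
    intro b hb
    obtain ⟨y, hy⟩ := (hconn v b).exists_dist_eq_of_le_dist hb.le
    exact ⟨b, y, by rintro rfl; omega, hb.le, hy.ge⟩
  obtain ⟨a, b, hab⟩ := G.exists_dist_eq_diam
  have htri : G.dist a b ≤ G.dist v a + G.dist v b := by
    rw [SimpleGraph.dist_comm (u := v)]
    exact hconn.dist_triangle
  by_cases ha : r ≤ G.dist v a
  · by_cases hb : r ≤ G.dist v b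
    · refine ⟨a, b, ?_, ha, hb⟩
      rintro rfl
      simp only [SimpleGraph.dist_self] at hab
      omega
    · exact of_lt_dist a (by omega)
  · exact of_lt_dist b (by omega)

theorem IsKAdjGen.le_card_filter_not_adj [Fintype W] {H : SimpleGraph W} {k : ℕ} {B : Finset W}
    (hB : IsKAdjGen H k B) (hdiam : 6 ≤ H.diam) (v : W) :
    k ≤ #(B.filter (¬ H.Adj v ·)) := by
  obtain ⟨x, y, hxy, hx, hy⟩ := exists_ne_of_two_mul_le_diam (r := 3) (by omega) hdiam v
  refine (hB x y hxy).trans (card_le_card (monotone_filter_right B fun w _ hw hvw => hw ?_))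
  rw [d2_eq_two_of_adj_of_three_le_dist hvw hx, d2_eq_two_of_adj_of_three_le_dist hvw hy]

end Distance

section Join

variable {G : SimpleGraph V} {H : SimpleGraph W}

@[simp] theorem join_adj_inr_inr {x y : W} : (join G H).Adj (.inr x) (.inr y) ↔ H.Adj x y :=
  Iff.rfl

@[simp] theorem join_adj_inl_inr {a : V} {y : W} : (join G H).Adj (.inl a) (.inr y) :=
  trivial

@[simp] theorem join_adj_inr_inl {x : W} {b : V} : (join G H).Adj (.inr x) (.inl b) :=
  trivial

@[simp] theorem d2_join_inr_inr (x y : W) : d2 (join G H) (.inr x) (.inr y) = d2 H x y := by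
  simp [d2]

@[simp] theorem d2_join_inl_inr (a : V) (y : W) : d2 (join G H) (.inl a) (.inr y) = 1 := by
  simp [d2]

@[simp] theorem d2_join_inr_inl (x : W) (b : V) : d2 (join G H) (.inr x) (.inl b) = 1 := by
  simp [d2]

variable [Fintype W] {k : ℕ}

theorem IsKAdjGen.toRight [Fintype V] {S : Finset (V ⊕ W)} (hS : IsKAdjGen (join G H) k S) :
    IsKAdjGen H k S.toRight := by
  intro x y hxy
  refine (hS (.inr x) (.inr y) (by simpa using hxy)).trans ?_
  refine (card_le_card fun w hw => ?_).trans_eq (card_map .inr)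
  obtain ⟨hwS, hwd⟩ := mem_filter.mp hw
  cases w with
  | inl a => simp at hwd
  | inr w => simpa [hwS] using hwd

end Join

theorem IsKAdjGen.map_inr_K1join [Fintype W] {H : SimpleGraph W} {k : ℕ} {B : Finset W}
    (hB : IsKAdjGen H k B) (hnadj : ∀ v, k ≤ #(B.filter (¬ H.Adj v ·))) :
    IsKAdjGen (K1join H) k (B.map .inr) := by
  have from_inl : ∀ y, k ≤ #((B.map .inr).filter
      (fun w => d2 (K1join H) (.inl ()) w ≠ d2 (K1join H) (.inr y) w)) := by
    intro y
    simp only [filter_map, card_map]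
    convert hnadj y using 3
    simp [K1join, Function.comp, eq_comm (a := 1), d2_eq_one_iff]
  rintro (⟨⟩ | x) (⟨⟩ | y) hxy
  · exact absurd rfl hxy
  · exact from_inl y
  · simpa only [ne_comm] using from_inl x
  · simp only [filter_map, card_map]
    simpa [K1join, Function.comp] using hB x y (by rintro rfl; exact hxy rfl)

theorem adim_K1join_eq_of_diam_general [Fintype W] (H : SimpleGraph W)
    (hdiam : 6 ≤ H.diam) (k : ℕ) :
    adim (K1join H) k = adim H k :=
  adim_eq_adim_of_forall_exists
    (fun S hS => ⟨S.toRight, IsKAdjGen.toRight (G := ⊥) hS, card_toRight_le⟩)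
    (fun B hB => ⟨B.map .inr, hB.map_inr_K1join (hB.le_card_filter_not_adj hdiam),
      (card_map _).le⟩)

/-- Corollary 4.4: for a connected graph `H` of diameter at least `6` and
`1 ≤ k ≤ C(K₁ + H)`, `adim_k(K₁ + H) = adim_k(H)`. -/
theorem adim_K1join_eq_of_diam [Fintype W] (H : SimpleGraph W)
    (hconn : H.Connected) (hdiam : 6 ≤ H.diam) (k : ℕ)
    (hk1 : 1 ≤ k) (hk2 : k ≤ Cmin (K1join H)) :
    adim (K1join H) k = adim H k :=
  adim_K1join_eq_of_diam_general H hdiam k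

end
end AdjDim
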